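/- arXiv:1309.3304 — 2 statements merged into one kernel-verified Lean document; each statement's English description precedes it below -/
import Mathlib

section
/- In an imbrex geometry of symplectic rank 2, every pair of non-concurrent lines of any symplecton is regular. -/
namespace ImbrexGeom

variable {P : Type*}

/-- Two points are collinear: equal or on a common line. -/
def Col (Ls : Set (Set P)) (x y : P) : Prop :=
  x = y ∨ ∃ L ∈ Ls, x ∈ L ∧ y ∈ L

/-- A line of the geometry induced on a subset `S`. -/
def LineIn (Ls : Set (Set P)) (S : Set P) (L : Set P) : Prop :=
  L ∈ Ls ∧ L ⊆ S

/-- Collinearity inside the geometry induced on `S`. -/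
def ColIn (Ls : Set (Set P)) (S : Set P) (x y : P) : Prop :=
  x = y ∨ ∃ L, LineIn Ls S L ∧ x ∈ L ∧ y ∈ L

/-- A subspace of the geometry induced on `S`. -/
def IsSubspaceIn (Ls : Set (Set P)) (S T : Set P) : Prop :=
  T ⊆ S ∧ ∀ L, LineIn Ls S L → ∀ x ∈ L, ∀ y ∈ L, x ≠ y → x ∈ T → y ∈ T → L ⊆ T

def IsSubspace (Ls : Set (Set P)) (T : Set P) : Prop :=
  IsSubspaceIn Ls Set.univ T

/-- A convex subspace (adapted to diameter 2): closed under taking common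
neighbours of non-collinear pairs, i.e. all points on shortest paths. -/
def IsConvex (Ls : Set (Set P)) (S : Set P) : Prop :=
  IsSubspace Ls S ∧ ∀ x ∈ S, ∀ y ∈ S, ¬ Col Ls x y →
    ∀ z, Col Ls x z → Col Ls z y → z ∈ S

/-- `S` is the smallest convex subspace containing `x` and `y`. -/
def SmallestConvex (Ls : Set (Set P)) (x y : P) (S : Set P) : Prop :=
  IsConvex Ls S ∧ x ∈ S ∧ y ∈ S ∧
    ∀ S', IsConvex Ls S' → x ∈ S' → y ∈ S' → S ⊆ S'

/-- A singular subspace of the geometry induced on `S`. -/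
def IsSingularIn (Ls : Set (Set P)) (S T : Set P) : Prop :=
  IsSubspaceIn Ls S T ∧ ∀ x ∈ T, ∀ y ∈ T, ColIn Ls S x y

def IsSingular (Ls : Set (Set P)) (T : Set P) : Prop :=
  IsSingularIn Ls Set.univ T

/-- A maximal singular subspace of the geometry induced on `S`. -/
def MaxSingularIn (Ls : Set (Set P)) (S T : Set P) : Prop :=
  IsSingularIn Ls S T ∧ ∀ T', IsSingularIn Ls S T' → T ⊆ T' → T' = T

/-- A block: a maximal singular subspace of the whole geometry. -/
def IsBlock (Ls : Set (Set P)) (B : Set P) : Prop :=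
  MaxSingularIn Ls Set.univ B

/-- The geometry induced on `S` has polar rank `r`: every nested (strictly
increasing) sequence of singular subspaces has length at most `r + 1`, and
one of length `r + 1` exists. -/
def HasPolarRank (Ls : Set (Set P)) (S : Set P) (r : ℕ) : Prop :=
  (∀ n : ℕ, ∀ f : Fin n → Set P, (∀ i, IsSingularIn Ls S (f i)) →
      (∀ i j, i < j → f i ⊂ f j) → n ≤ r + 1) ∧
  ∃ f : Fin (r + 1) → Set P, (∀ i, IsSingularIn Ls S (f i)) ∧
      ∀ i j : Fin (r + 1), i < j → f i ⊂ f j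

/-- The geometry induced on `S` is a polar space of rank `r`
(Buekenhout–Shult axioms). -/
def IsPolarSpace (Ls : Set (Set P)) (S : Set P) (r : ℕ) : Prop :=
  (∀ L, LineIn Ls S L → ∃ x ∈ L, ∃ y ∈ L, ∃ z ∈ L, x ≠ y ∧ x ≠ z ∧ y ≠ z) ∧
  (∀ x ∈ S, ∃ y ∈ S, ¬ ColIn Ls S x y) ∧
  HasPolarRank Ls S r ∧
  (∀ x ∈ S, ∀ L, LineIn Ls S L → x ∉ L →
      (∃! y, y ∈ L ∧ ColIn Ls S x y) ∨ ∀ y ∈ L, ColIn Ls S x y)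

/-- A strong parapolar space of diameter 2. -/
structure StrongParapolar2 (Ls : Set (Set P)) : Prop where
  connected : ∀ x y : P, Relation.ReflTransGen (Col Ls) x y
  pps1 : ∀ x : P, ∀ L ∈ Ls, x ∉ L →
      (∀ y ∈ L, ¬ Col Ls x y) ∨ (∃! y, y ∈ L ∧ Col Ls x y) ∨ ∀ y ∈ L, Col Ls x y
  pps1_none : ∃ x : P, ∃ L ∈ Ls, ∀ y ∈ L, ¬ Col Ls x y
  pps1_one : ∃ x : P, ∃ L ∈ Ls, x ∉ L ∧ ∃! y, y ∈ L ∧ Col Ls x y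
  pps1_all : ∃ x : P, ∃ L ∈ Ls, x ∉ L ∧ ∀ y ∈ L, Col Ls x y
  pps2 : ∀ x y : P, ¬ Col Ls x y →
      ∃ S, SmallestConvex Ls x y S ∧ ∃ r, 2 ≤ r ∧ IsPolarSpace Ls S r

/-- A symplecton: the smallest convex subspace of a non-collinear pair. -/
def IsSymp (Ls : Set (Set P)) (S : Set P) : Prop :=
  ∃ x y, ¬ Col Ls x y ∧ SmallestConvex Ls x y S

/-- (PPS4): every nested sequence of singular subspaces has finite length. -/
def PPS4 (Ls : Set (Set P)) : Prop :=
  ∀ f : ℕ → Set P, (∀ n, IsSingular Ls (f n)) → ¬ ∀ n, f n ⊂ f (n + 1)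

/-- The imbrex axiom (Imb). -/
def Imb (Ls : Set (Set P)) : Prop :=
  ∀ x : P, ∀ L ∈ Ls, (∀ y ∈ L, ¬ Col Ls x y) →
    ∀ y₁ ∈ L, ∀ y₂ ∈ L, y₁ ≠ y₂ →
      ∀ S₁ S₂, SmallestConvex Ls x y₁ S₁ → SmallestConvex Ls x y₂ S₂ →
        MaxSingularIn Ls S₁ (S₁ ∩ S₂) ∧ MaxSingularIn Ls S₂ (S₁ ∩ S₂)

/-- An imbrex geometry. -/
structure ImbrexGeometry (Ls : Set (Set P)) : Prop where
  spp : StrongParapolar2 Ls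
  pps4 : PPS4 Ls
  imb : Imb Ls

/-- The geometry has symplectic rank `r`: all symplecta have polar rank `r`. -/
def SympRank (Ls : Set (Set P)) (r : ℕ) : Prop :=
  ∀ S, IsSymp Ls S → HasPolarRank Ls S r

/-- All symplecta are thick generalized quadrangles: every point of a
symplecton lies on at least three lines of it (lines already have at least
three points by the polar space axioms). -/
def ThickSymps (Ls : Set (Set P)) : Prop :=
  ∀ S, IsSymp Ls S → ∀ x ∈ S, ∃ L₁ L₂ L₃, LineIn Ls S L₁ ∧ LineIn Ls S L₂ ∧
    LineIn Ls S L₃ ∧ L₁ ≠ L₂ ∧ L₁ ≠ L₃ ∧ L₂ ≠ L₃ ∧ x ∈ L₁ ∧ x ∈ L₂ ∧ x ∈ L₃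

/-- The perp of a set of lines in the geometry induced on `S`: all lines of
`S` concurrent with every member of the set. -/
def PerpSet (Ls : Set (Set P)) (S : Set P) (T : Set (Set P)) : Set (Set P) :=
  {N | LineIn Ls S N ∧ ∀ M ∈ T, (N ∩ M).Nonempty}

/-- A pair of lines is regular. -/
def RegularPair (Ls : Set (Set P)) (S : Set P) (L M : Set P) : Prop :=
  ∃ L' M', L' ∈ PerpSet Ls S {L, M} ∧ M' ∈ PerpSet Ls S {L, M} ∧ L' ≠ M' ∧
    PerpSet Ls S (PerpSet Ls S {L, M}) = PerpSet Ls S {L', M'}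

/-- `N` is a member of the spread of the symplecton `H` induced by the
block `B`: `N = B' ∩ H` for some block `B'` meeting `B`. -/
def InSpreadOf (Ls : Set (Set P)) (H B : Set P) (N : Set P) : Prop :=
  ∃ B', IsBlock Ls B' ∧ (B' ∩ B).Nonempty ∧ N = B' ∩ H


section Toolkit

variable {Ls : Set (Set P)}

lemma col_refl (Ls : Set (Set P)) (x : P) : Col Ls x x := Or.inl rfl

lemma col_symm {x y : P} (h : Col Ls x y) : Col Ls y x := by
  rcases h with h | ⟨L, hL, hx, hy⟩
  · exact Or.inl h.symm
  · exact Or.inr ⟨L, hL, hy, hx⟩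

lemma colIn_refl (Ls : Set (Set P)) (S : Set P) (x : P) : ColIn Ls S x x := Or.inl rfl

lemma colIn_symm {S : Set P} {x y : P} (h : ColIn Ls S x y) : ColIn Ls S y x := by
  rcases h with h | ⟨L, hL, hx, hy⟩
  · exact Or.inl h.symm
  · exact Or.inr ⟨L, hL, hy, hx⟩

lemma colIn_of_line {S L : Set P} (hL : LineIn Ls S L) {x y : P}
    (hx : x ∈ L) (hy : y ∈ L) : ColIn Ls S x y :=
  Or.inr ⟨L, hL, hx, hy⟩

lemma col_of_line {L : Set P} (hL : L ∈ Ls) {x y : P}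
    (hx : x ∈ L) (hy : y ∈ L) : Col Ls x y :=
  Or.inr ⟨L, hL, hx, hy⟩

lemma col_of_colIn {S : Set P} {x y : P} (h : ColIn Ls S x y) : Col Ls x y := by
  rcases h with h | ⟨L, hL, hx, hy⟩
  · exact Or.inl h
  · exact Or.inr ⟨L, hL.1, hx, hy⟩

/-- In a subspace, a (global) line through two of its distinct points is contained in it. -/
lemma line_subset_of_subspace {S : Set P} (hS : IsSubspace Ls S) {L : Set P} (hL : L ∈ Ls)
    {x y : P} (hx : x ∈ L) (hy : y ∈ L) (hxy : x ≠ y) (hxS : x ∈ S) (hyS : y ∈ S) :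
    L ⊆ S :=
  hS.2 L ⟨hL, Set.subset_univ L⟩ x hx y hy hxy hxS hyS

lemma colIn_of_col {S : Set P} (hS : IsSubspace Ls S) {x y : P}
    (hxS : x ∈ S) (hyS : y ∈ S) (h : Col Ls x y) : ColIn Ls S x y := by
  rcases h with h | ⟨L, hL, hx, hy⟩
  · exact Or.inl h
  · rcases eq_or_ne x y with rfl | hxy
    · exact Or.inl rfl
    · exact Or.inr ⟨L, ⟨hL, line_subset_of_subspace hS hL hx hy hxy hxS hyS⟩, hx, hy⟩

/-- get a line (inside a subspace) through two distinct collinear points of it -/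
lemma exists_lineIn_of_col {S : Set P} (hS : IsSubspace Ls S) {x y : P}
    (hxS : x ∈ S) (hyS : y ∈ S) (h : Col Ls x y) (hxy : x ≠ y) :
    ∃ L, LineIn Ls S L ∧ x ∈ L ∧ y ∈ L := by
  rcases colIn_of_col hS hxS hyS h with h' | h'
  · exact absurd h' hxy
  · exact h'

lemma smallestConvex_unique {x y : P} {S S' : Set P}
    (h : SmallestConvex Ls x y S) (h' : SmallestConvex Ls x y S') : S = S' :=
  Set.Subset.antisymm (h.2.2.2 S' h'.1 h'.2.1 h'.2.2.1) (h'.2.2.2 S h.1 h.2.1 h.2.2.1)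

/-- All facts we need about a symplecton. -/
structure SympFacts (Ls : Set (Set P)) (S : Set P) : Prop where
  symp : IsSymp Ls S
  conv : IsConvex Ls S
  thickLines : ∀ L, LineIn Ls S L → ∃ x ∈ L, ∃ y ∈ L, ∃ z ∈ L, x ≠ y ∧ x ≠ z ∧ y ≠ z
  nondeg : ∀ x ∈ S, ∃ y ∈ S, ¬ ColIn Ls S x y
  bs : ∀ x ∈ S, ∀ L, LineIn Ls S L → x ∉ L →
      (∃! y, y ∈ L ∧ ColIn Ls S x y) ∨ ∀ y ∈ L, ColIn Ls S x y
  bound : ∀ n : ℕ, ∀ f : Fin n → Set P, (∀ i, IsSingularIn Ls S (f i)) →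
      (∀ i j, i < j → f i ⊂ f j) → n ≤ 3
  chain3 : ∃ f : Fin 3 → Set P, (∀ i, IsSingularIn Ls S (f i)) ∧
      ∀ i j : Fin 3, i < j → f i ⊂ f j

lemma sympFacts (hΓ : ImbrexGeometry Ls) (hrk : SympRank Ls 2) {S : Set P}
    (hS : IsSymp Ls S) : SympFacts Ls S := by
  obtain ⟨x, y, hncol, hsc⟩ := hS
  obtain ⟨S', hsc', r, hr2, hpolar⟩ := hΓ.spp.pps2 x y hncol
  have hSS' : S = S' := smallestConvex_unique hsc hsc'
  subst hSS'
  have hrank := hrk S ⟨x, y, hncol, hsc⟩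
  exact {
    symp := ⟨x, y, hncol, hsc⟩
    conv := hsc.1
    thickLines := hpolar.1
    nondeg := hpolar.2.1
    bs := hpolar.2.2.2
    bound := hrank.1
    chain3 := hrank.2 }

end Toolkit

section Toolkit2

variable {Ls : Set (Set P)} {S : Set P}

lemma SympFacts.subspace (hS : SympFacts Ls S) : IsSubspace Ls S := hS.conv.1

lemma SympFacts.line_nonempty (hS : SympFacts Ls S) {L : Set P} (hL : LineIn Ls S L) :
    ∃ x, x ∈ L := by
  obtain ⟨x, hx, -⟩ := hS.thickLines L hL
  exact ⟨x, hx⟩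

/-- BS: every point sees at least one point of every line. -/
lemma SympFacts.sees (hS : SympFacts Ls S) {x : P} (hx : x ∈ S) {L : Set P}
    (hL : LineIn Ls S L) : ∃ y ∈ L, ColIn Ls S x y := by
  by_cases hxL : x ∈ L
  · exact ⟨x, hxL, colIn_refl Ls S x⟩
  · rcases hS.bs x hx L hL hxL with ⟨y, ⟨hy, hcy⟩, -⟩ | hall
    · exact ⟨y, hy, hcy⟩
    · obtain ⟨y, hy⟩ := hS.line_nonempty hL
      exact ⟨y, hy, hall y hy⟩

/-- two ⇒ all. -/
lemma SympFacts.two_all (hS : SympFacts Ls S) {x : P} (hx : x ∈ S) {L : Set P}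
    (hL : LineIn Ls S L) {y z : P} (hy : y ∈ L) (hz : z ∈ L) (hyz : y ≠ z)
    (hxy : ColIn Ls S x y) (hxz : ColIn Ls S x z) :
    ∀ w ∈ L, ColIn Ls S x w := by
  by_cases hxL : x ∈ L
  · exact fun w hw => colIn_of_line hL hxL hw
  · rcases hS.bs x hx L hL hxL with ⟨u, -, huniq⟩ | hall
    · exact absurd ((huniq y ⟨hy, hxy⟩).trans (huniq z ⟨hz, hxz⟩).symm) hyz
    · exact hall

/-- the perp of a set, within `S`. -/
def PerpPts (Ls : Set (Set P)) (S A : Set P) : Set P :=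
  {z | z ∈ S ∧ ∀ a ∈ A, ColIn Ls S z a}

lemma perpPts_subspace (hS : SympFacts Ls S) {A : Set P} (hA : A ⊆ S) :
    IsSubspaceIn Ls S (PerpPts Ls S A) := by
  constructor
  · exact fun z hz => hz.1
  · intro L hL x hx y hy hxy hxT hyT w hw
    refine ⟨hL.2 hw, fun a ha => ?_⟩
    exact colIn_symm (hS.two_all (hA ha) hL hx hy hxy
      (colIn_symm (hxT.2 a ha)) (colIn_symm (hyT.2 a ha)) w hw)

lemma perpPts_antitone {A B : Set P} (h : A ⊆ B) :
    PerpPts Ls S B ⊆ PerpPts Ls S A :=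
  fun _ hz => ⟨hz.1, fun a ha => hz.2 a (h ha)⟩

lemma subset_perpPts_self {A : Set P} (hA : A ⊆ S) (hpair : A.Pairwise (ColIn Ls S)) :
    A ⊆ PerpPts Ls S A := by
  intro a ha
  refine ⟨hA ha, fun b hb => ?_⟩
  rcases eq_or_ne a b with rfl | hne
  · exact colIn_refl Ls S a
  · exact hpair ha hb hne

/-- double perp -/
def DD (Ls : Set (Set P)) (S A : Set P) : Set P := PerpPts Ls S (PerpPts Ls S A)

lemma subset_DD {A : Set P} (hA : A ⊆ S) : A ⊆ DD Ls S A := by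
  intro a ha
  exact ⟨hA ha, fun z hz => colIn_symm (hz.2 a ha)⟩

lemma DD_pairwise {A : Set P} (hA : A ⊆ S) (hpair : A.Pairwise (ColIn Ls S)) :
    (DD Ls S A).Pairwise (ColIn Ls S) := by
  intro z hz w hw _
  have hwp : w ∈ PerpPts Ls S A :=
    perpPts_antitone (subset_perpPts_self hA hpair) hw
  exact hz.2 w hwp

lemma DD_singular (hS : SympFacts Ls S) {A : Set P} (hA : A ⊆ S)
    (hpair : A.Pairwise (ColIn Ls S)) : IsSingularIn Ls S (DD Ls S A) := by
  refine ⟨perpPts_subspace hS (fun z hz => hz.1), ?_⟩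
  intro x hx y hy
  rcases eq_or_ne x y with rfl | hne
  · exact colIn_refl Ls S x
  · exact DD_pairwise hA hpair hx hy hne

lemma DD_mono {A B : Set P} (h : A ⊆ B) : DD Ls S A ⊆ DD Ls S B :=
  perpPts_antitone (perpPts_antitone h)

lemma empty_singular : IsSingularIn Ls S (∅ : Set P) := by
  refine ⟨⟨Set.empty_subset S, ?_⟩, by simp⟩
  intro L _ x _ y _ _ hxT
  exact absurd hxT (Set.notMem_empty x)

lemma singleton_singular {x : P} (hx : x ∈ S) : IsSingularIn Ls S ({x} : Set P) := by
  constructor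
  · refine ⟨by simpa using hx, ?_⟩
    intro L _ a ha b hb hab haT hbT
    rw [Set.mem_singleton_iff] at haT hbT
    exact absurd (haT.trans hbT.symm) hab
  · intro a ha b hb
    rw [Set.mem_singleton_iff] at ha hb
    rw [ha, hb]
    exact colIn_refl Ls S x

lemma singularIn_inter {T T' : Set P} (h : IsSubspaceIn Ls S T) (h' : IsSingularIn Ls S T') :
    IsSingularIn Ls S (T ∩ T') := by
  constructor
  · constructor
    · exact fun z hz => h.1 hz.1
    · intro L hL x hx y hy hxy hxT hyT
      exact Set.subset_inter (h.2 L hL x hx y hy hxy hxT.1 hyT.1)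
        (h'.1.2 L hL x hx y hy hxy hxT.2 hyT.2)
  · exact fun x hx y hy => h'.2 x hx.2 y hy.2

lemma SympFacts.no_chain4 (hS : SympFacts Ls S) {T0 T1 T2 T3 : Set P}
    (h0 : IsSingularIn Ls S T0) (h1 : IsSingularIn Ls S T1)
    (h2 : IsSingularIn Ls S T2) (h3 : IsSingularIn Ls S T3)
    (h01 : T0 ⊂ T1) (h12 : T1 ⊂ T2) (h23 : T2 ⊂ T3) : False := by
  have := hS.bound 4 ![T0, T1, T2, T3] ?_ ?_
  · omega
  · intro i
    fin_cases i <;> simpa using ‹_›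
  · have h02 := h01.trans h12
    have h13 := h12.trans h23
    have h03 := h02.trans h23
    intro i j hij
    fin_cases i <;> fin_cases j <;>
      first
        | exact absurd hij (by decide)
        | simpa using h01
        | simpa using h12
        | simpa using h23
        | simpa using h02
        | simpa using h13
        | simpa using h03

end Toolkit2

section Toolkit3

variable {Ls : Set (Set P)} {S : Set P}

/-- Lemma A: in a symplecton, no point off a line is collinear with two of its points. -/
lemma SympFacts.noCone (hS : SympFacts Ls S) {K : Set P} (hK : LineIn Ls S K) {p k₁ k₂ : P}
    (hpS : p ∈ S) (hpK : p ∉ K) (h1 : k₁ ∈ K) (h2 : k₂ ∈ K) (h12 : k₁ ≠ k₂)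
    (hc1 : ColIn Ls S p k₁) (hc2 : ColIn Ls S p k₂) : False := by
  have hKS : K ⊆ S := hK.2
  have hall : ∀ w ∈ K, ColIn Ls S p w := hS.two_all hpS hK h1 h2 h12 hc1 hc2
  -- the singular subspace W
  set X : Set P := insert p K with hX
  have hXS : X ⊆ S := by
    intro z hz; rcases hz with rfl | hz
    · exact hpS
    · exact hKS hz
  have hXpair : X.Pairwise (ColIn Ls S) := by
    intro a ha b hb hab
    rcases ha with rfl | ha
    · rcases hb with rfl | hb
      · exact absurd rfl hab
      · exact hall b hb
    · rcases hb with rfl | hb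
      · exact colIn_symm (hall a ha)
      · exact colIn_of_line hK ha hb
  set W : Set P := DD Ls S X with hW
  have hWsing : IsSingularIn Ls S W := DD_singular hS hXS hXpair
  have hWS : W ⊆ S := hWsing.1.1
  have hXW : X ⊆ W := subset_DD hXS
  have hWpair : W.Pairwise (ColIn Ls S) := DD_pairwise hXS hXpair
  have hpW : p ∈ W := hXW (Set.mem_insert p K)
  have hKW : K ⊆ W := fun z hz => hXW (Set.mem_insert_of_mem p hz)
  have hk1S : k₁ ∈ S := hKS h1
  -- Case A: a cone point over all of W
  by_cases hcase : ∃ t ∈ S, t ∉ W ∧ ∀ w ∈ W, ColIn Ls S t w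
  · obtain ⟨t, htS, htW, htall⟩ := hcase
    have hYS : (insert t W : Set P) ⊆ S := by
      intro z hz; rcases hz with rfl | hz
      · exact htS
      · exact hWS hz
    have hYpair : (insert t W : Set P).Pairwise (ColIn Ls S) := by
      intro a ha b hb hab
      rcases ha with rfl | ha
      · rcases hb with rfl | hb
        · exact absurd rfl hab
        · exact htall b hb
      · rcases hb with rfl | hb
        · exact colIn_symm (htall a ha)
        · rcases eq_or_ne a b with rfl | hne
          · exact colIn_refl Ls S a
          · exact hWpair ha hb hne
    have hY : IsSingularIn Ls S (DD Ls S (insert t W)) := DD_singular hS hYS hYpair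
    refine hS.no_chain4 empty_singular (singleton_singular hk1S) hWsing hY ?_ ?_ ?_
    · exact ⟨Set.empty_subset _, fun h => (Set.notMem_empty k₁) (h rfl)⟩
    · constructor
      · intro z hz; rw [Set.mem_singleton_iff] at hz; rw [hz]; exact hKW h1
      · intro hsub
        exact h12 ((hsub (hKW h2)).symm)
    · constructor
      · exact (subset_DD hYS).trans' (Set.subset_insert t W) |>.trans (le_refl _)
      · intro hsub
        exact htW (hsub (subset_DD hYS (Set.mem_insert t W)))
  -- Case B
  · push_neg at hcase
    -- uniqueness of W-perps for points off W
    have huniq : ∀ u ∈ S, u ∉ W → ∀ a ∈ W, ∀ b ∈ W,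
        ColIn Ls S u a → ColIn Ls S u b → a = b := by
      intro u huS huW a haW b hbW hua hub
      by_contra hab
      obtain ⟨w, hwW, hwnc⟩ := hcase u huS huW
      have hM : IsSingularIn Ls S (PerpPts Ls S {u} ∩ W) :=
        singularIn_inter (perpPts_subspace hS (by simpa using huS)) hWsing
      have haM : a ∈ PerpPts Ls S {u} ∩ W :=
        ⟨⟨hWS haW, by simpa using colIn_symm hua⟩, haW⟩
      have hbM : b ∈ PerpPts Ls S {u} ∩ W :=
        ⟨⟨hWS hbW, by simpa using colIn_symm hub⟩, hbW⟩
      refine hS.no_chain4 empty_singular (singleton_singular (hWS haW)) hM hWsing ?_ ?_ ?_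
      · exact ⟨Set.empty_subset _, fun h => (Set.notMem_empty a) (h rfl)⟩
      · constructor
        · intro z hz; rw [Set.mem_singleton_iff] at hz; rw [hz]; exact haM
        · intro hsub
          exact hab ((hsub hbM).symm)
      · constructor
        · exact Set.inter_subset_right
        · intro hsub
          exact hwnc (colIn_symm (((hsub hwW).1.2) u rfl))
    -- a line G through p and k₁, inside W
    have hpk1 : p ≠ k₁ := fun h => hpK (h ▸ h1)
    obtain ⟨G, hG, hpG, hk1G⟩ : ∃ G, LineIn Ls S G ∧ p ∈ G ∧ k₁ ∈ G := by
      rcases hc1 with h | h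
      · exact absurd h hpk1
      · exact ⟨h.choose, h.choose_spec.1, h.choose_spec.2.1, h.choose_spec.2.2⟩
    have hGW : G ⊆ W := hWsing.1.2 G hG p hpG k₁ hk1G hpk1 hpW (hKW h1)
    -- φ : for u off W, its unique W-perp lies in K (and in G)
    have hphi : ∀ u ∈ S, u ∉ W → ∃ q ∈ K, ColIn Ls S u q := by
      intro u huS huW
      have huK : u ∉ K := fun h => huW (hKW h)
      exact hS.sees huS hK
    have hphiK : ∀ u ∈ S, u ∉ W → ∀ a ∈ W, ColIn Ls S u a → a ∈ K := by
      intro u huS huW a haW hua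
      obtain ⟨q, hqK, huq⟩ := hphi u huS huW
      have := huniq u huS huW a haW q (hKW hqK) hua huq
      rw [this]; exact hqK
    -- v₁ non-collinear with k₁
    obtain ⟨v₁, hv₁S, hv₁nc⟩ := hS.nondeg k₁ hk1S
    have hv₁W : v₁ ∉ W := by
      intro h
      rcases eq_or_ne v₁ k₁ with rfl | hne
      · exact hv₁nc (colIn_refl Ls S v₁)
      · exact hv₁nc (colIn_symm (hWpair h (hKW h1) hne))
    obtain ⟨q₁, hq₁K, hv₁q₁⟩ := hphi v₁ hv₁S hv₁W
    have hq₁S : q₁ ∈ S := hKS hq₁K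
    -- v₂ non-collinear with q₁
    obtain ⟨v₂, hv₂S, hv₂nc⟩ := hS.nondeg q₁ hq₁S
    have hv₂W : v₂ ∉ W := by
      intro h
      rcases eq_or_ne v₂ q₁ with rfl | hne
      · exact hv₂nc (colIn_refl Ls S v₂)
      · exact hv₂nc (colIn_symm (hWpair h (hKW hq₁K) hne))
    obtain ⟨q₂, hq₂K, hv₂q₂⟩ := hphi v₂ hv₂S hv₂W
    have hq₁q₂ : q₁ ≠ q₂ := by
      rintro rfl
      exact hv₂nc (colIn_symm hv₂q₂)
    -- line Λ₂ through v₂ and q₂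
    have hv₂q₂ne : v₂ ≠ q₂ := fun h => hv₂W (h ▸ hKW hq₂K)
    obtain ⟨Λ₂, hΛ₂, hv₂Λ, hq₂Λ⟩ : ∃ L, LineIn Ls S L ∧ v₂ ∈ L ∧ q₂ ∈ L := by
      rcases hv₂q₂ with h | h
      · exact absurd h hv₂q₂ne
      · exact ⟨h.choose, h.choose_spec.1, h.choose_spec.2.1, h.choose_spec.2.2⟩
    have hv₁Λ₂ : v₁ ∉ Λ₂ := by
      intro h
      have : ColIn Ls S v₁ q₂ := colIn_of_line hΛ₂ h hq₂Λ
      exact hq₁q₂ (huniq v₁ hv₁S hv₁W q₁ (hKW hq₁K) q₂ (hKW hq₂K) hv₁q₁ this)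
    obtain ⟨t, htΛ, hv₁t⟩ := hS.sees hv₁S hΛ₂
    have htS : t ∈ S := hΛ₂.2 htΛ
    have htW : t ∉ W := by
      intro htW
      have htv₂ : t ≠ v₂ := fun h => hv₂W (h ▸ htW)
      have : ColIn Ls S v₂ t := colIn_symm (colIn_of_line hΛ₂ htΛ hv₂Λ)
      have ht2 : t = q₂ := huniq v₂ hv₂S hv₂W t htW q₂ (hKW hq₂K) this hv₂q₂
      rw [ht2] at hv₁t
      exact hq₁q₂ (huniq v₁ hv₁S hv₁W q₁ (hKW hq₁K) q₂ (hKW hq₂K) hv₁q₁ hv₁t)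
    have htq₂ : ColIn Ls S t q₂ := colIn_of_line hΛ₂ htΛ hq₂Λ
    -- line Λ₃ through v₁ and t
    have hv₁tne : v₁ ≠ t := by
      rintro rfl
      exact hq₁q₂ (huniq v₁ hv₁S hv₁W q₁ (hKW hq₁K) q₂ (hKW hq₂K) hv₁q₁ htq₂)
    obtain ⟨Λ₃, hΛ₃, hv₁Λ₃, htΛ₃⟩ : ∃ L, LineIn Ls S L ∧ v₁ ∈ L ∧ t ∈ L := by
      rcases hv₁t with h | h
      · exact absurd h hv₁tne
      · exact ⟨h.choose, h.choose_spec.1, h.choose_spec.2.1, h.choose_spec.2.2⟩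
    obtain ⟨x, hxΛ₃, hpx⟩ := hS.sees hpS hΛ₃
    have hxS : x ∈ S := hΛ₃.2 hxΛ₃
    by_cases hxW : x ∈ W
    · -- x is collinear with both v₁ and t, so x = q₁ and x = q₂
      have hxv₁ : x ≠ v₁ := fun h => hv₁W (h ▸ hxW)
      have hxt : x ≠ t := fun h => htW (h ▸ hxW)
      have h1' : ColIn Ls S v₁ x := colIn_symm (colIn_of_line hΛ₃ hxΛ₃ hv₁Λ₃)
      have h2' : ColIn Ls S t x := colIn_symm (colIn_of_line hΛ₃ hxΛ₃ htΛ₃)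
      have e1 : x = q₁ := by
        have := huniq v₁ hv₁S hv₁W x hxW q₁ (hKW hq₁K) h1' hv₁q₁
        exact this
      have e2 : x = q₂ := huniq t htS htW x hxW q₂ (hKW hq₂K) h2' htq₂
      exact hq₁q₂ (e1 ▸ e2 ▸ rfl)
    · -- x off W sees p ∈ W, so p ∈ K: contradiction
      have : p ∈ K := hphiK x hxS hxW p hpW (colIn_symm hpx)
      exact hpK this
end Toolkit3

section Toolkit4

variable {Ls : Set (Set P)} {S : Set P}

lemma not_mem_of_disj {A B : Set P} (h : A ∩ B = ∅) {a : P} (ha : a ∈ A) : a ∉ B := by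
  intro hb
  have : a ∈ A ∩ B := ⟨ha, hb⟩
  rw [h] at this
  exact this

/-- uniqueness of the seen point on a line -/
lemma SympFacts.sees_unique (hS : SympFacts Ls S) {x : P} (hx : x ∈ S) {L : Set P}
    (hL : LineIn Ls S L) (hxL : x ∉ L) {y z : P} (hy : y ∈ L) (hz : z ∈ L)
    (hcy : ColIn Ls S x y) (hcz : ColIn Ls S x z) : y = z := by
  by_contra hne
  exact hS.noCone hL hx hxL hy hz hne hcy hcz

/-- no digons: two lines with two common points coincide -/
lemma SympFacts.line_eq (hS : SympFacts Ls S) {L L' : Set P}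
    (hL : LineIn Ls S L) (hL' : LineIn Ls S L') {x y : P} (hx : x ∈ L) (hx' : x ∈ L')
    (hy : y ∈ L) (hy' : y ∈ L') (hxy : x ≠ y) : L = L' := by
  by_contra hne
  have h2 : ¬(L ⊆ L') ∨ ¬(L' ⊆ L) := by
    by_contra h
    push_neg at h
    exact hne (Set.Subset.antisymm h.1 h.2)
  rcases h2 with h | h
  · obtain ⟨z, hzL, hzL'⟩ := Set.not_subset.mp h
    exact hS.noCone hL' (hL.2 hzL) hzL' hx' hy' hxy
      (colIn_of_line hL hzL hx) (colIn_of_line hL hzL hy)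
  · obtain ⟨z, hzL', hzL⟩ := Set.not_subset.mp h
    exact hS.noCone hL (hL'.2 hzL') hzL hx hy hxy
      (colIn_of_line hL' hzL' hx') (colIn_of_line hL' hzL' hy')

lemma SympFacts.line_singular (hS : SympFacts Ls S) {L : Set P} (hL : LineIn Ls S L) :
    IsSingularIn Ls S L := by
  constructor
  · refine ⟨hL.2, ?_⟩
    intro L' hL' x hx y hy hxy hxT hyT
    rw [hS.line_eq hL' hL hx hxT hy hyT hxy]
  · exact fun x hx y hy => colIn_of_line hL hx hy

lemma SympFacts.exists_line (hS : SympFacts Ls S) : ∃ L, LineIn Ls S L := by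
  obtain ⟨f, hsing, hmono⟩ := hS.chain3
  obtain ⟨a, ha1, ha0⟩ := Set.exists_of_ssubset (hmono 0 1 (by decide))
  obtain ⟨b, hb2, hb1⟩ := Set.exists_of_ssubset (hmono 1 2 (by decide))
  have ha2 : a ∈ f 2 := (hmono 1 2 (by decide)).1 ha1
  have hab : a ≠ b := fun h => hb1 (h ▸ ha1)
  have hcol : ColIn Ls S a b := (hsing 2).2 a ha2 b hb2
  rcases hcol with h | ⟨L, hL, _, _⟩
  · exact absurd h hab
  · exact ⟨L, hL⟩

lemma SympFacts.mem_line (hS : SympFacts Ls S) {x : P} (hx : x ∈ S) :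
    ∃ L, LineIn Ls S L ∧ x ∈ L := by
  obtain ⟨L, hL⟩ := hS.exists_line
  by_cases hxL : x ∈ L
  · exact ⟨L, hL, hxL⟩
  · obtain ⟨y, hy, hcy⟩ := hS.sees hx hL
    rcases hcy with h | ⟨L', hL', hx', hy'⟩
    · exact absurd (h ▸ hy) hxL
    · exact ⟨L', hL', hx'⟩

/-- two distinct transversals of a disjoint pair of lines are disjoint -/
lemma SympFacts.transversal_disjoint (hS : SympFacts Ls S) {Pl Q T T' : Set P}
    (hPl : LineIn Ls S Pl) (hQ : LineIn Ls S Q) (hT : LineIn Ls S T) (hT' : LineIn Ls S T')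
    (hPQ : Pl ∩ Q = ∅) (hTT' : T ≠ T')
    (hTP : (T ∩ Pl).Nonempty) (hTQ : (T ∩ Q).Nonempty)
    (hT'P : (T' ∩ Pl).Nonempty) (hT'Q : (T' ∩ Q).Nonempty) :
    T ∩ T' = ∅ := by
  by_contra hne
  obtain ⟨t, htT, htT'⟩ := Set.nonempty_iff_ne_empty.mpr hne
  obtain ⟨p₁, hp₁T, hp₁P⟩ := hTP
  obtain ⟨q₁, hq₁T, hq₁Q⟩ := hTQ
  obtain ⟨p₁', hp₁'T, hp₁'P⟩ := hT'P
  obtain ⟨q₁', hq₁'T, hq₁'Q⟩ := hT'Q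
  have htS : t ∈ S := hT.2 htT
  by_cases htP : t ∈ Pl
  · have htQ : t ∉ Q := not_mem_of_disj hPQ htP
    have hq : q₁ = q₁' := hS.sees_unique htS hQ htQ hq₁Q hq₁'Q
      (colIn_of_line hT htT hq₁T) (colIn_of_line hT' htT' hq₁'T)
    have htq : t ≠ q₁ := fun h => htQ (h ▸ hq₁Q)
    exact hTT' (hS.line_eq hT hT' htT htT' hq₁T (hq ▸ hq₁'T) htq)
  · have hp : p₁ = p₁' := hS.sees_unique htS hPl htP hp₁P hp₁'P
      (colIn_of_line hT htT hp₁T) (colIn_of_line hT' htT' hp₁'T)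
    have htp : t ≠ p₁ := fun h => htP (h ▸ hp₁P)
    exact hTT' (hS.line_eq hT hT' htT htT' hp₁T (hp ▸ hp₁'T) htp)

end Toolkit4

section Toolkit5

variable {Ls : Set (Set P)} {S : Set P}

/-- a symplecton is the smallest convex subspace of any of its non-collinear pairs -/
lemma SympFacts.generated (hΓ : ImbrexGeometry Ls) (hrk : SympRank Ls 2)
    (hS : SympFacts Ls S) {u v : P} (hu : u ∈ S) (hv : v ∈ S) (hnc : ¬ Col Ls u v) :
    SmallestConvex Ls u v S := by
  obtain ⟨S', hsc', r, hr, hpolar'⟩ := hΓ.spp.pps2 u v hnc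
  have hS' : SympFacts Ls S' := sympFacts hΓ hrk ⟨u, v, hnc, hsc'⟩
  have hsub : S' ⊆ S := hsc'.2.2.2 S hS.conv hu hv
  have hsup : S ⊆ S' := by
    intro z hz
    by_contra hzS'
    -- no two distinct points of S' collinear with z
    have hone : ∀ d₁ ∈ S', ∀ d₂ ∈ S', ColIn Ls S z d₁ → ColIn Ls S z d₂ → d₁ = d₂ := by
      intro d₁ h₁ d₂ h₂ hc₁ hc₂
      by_contra hne
      have hcol12 : Col Ls d₁ d₂ := by
        by_contra hnc12
        exact hzS' (hsc'.1.2 d₁ h₁ d₂ h₂ hnc12 z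
          (col_symm (col_of_colIn hc₁)) (col_of_colIn hc₂))
      obtain ⟨Λ, hΛmem, hd₁, hd₂⟩ : ∃ L ∈ Ls, d₁ ∈ L ∧ d₂ ∈ L := by
        rcases hcol12 with h | h
        · exact absurd h hne
        · exact h
      have hΛS' : Λ ⊆ S' := line_subset_of_subspace hS'.subspace hΛmem hd₁ hd₂ hne h₁ h₂
      have hΛ : LineIn Ls S Λ := ⟨hΛmem, hΛS'.trans hsub⟩
      have hzΛ : z ∉ Λ := fun h => hzS' (hΛS' h)
      exact hS.noCone hΛ hz hzΛ hd₁ hd₂ hne hc₁ hc₂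
    -- the common point of every line of S'
    obtain ⟨Λ₀, hΛ₀⟩ := hS'.exists_line
    have hΛ₀S : LineIn Ls S Λ₀ := ⟨hΛ₀.1, hΛ₀.2.trans hsub⟩
    obtain ⟨d, hdΛ₀, hzd⟩ := hS.sees hz hΛ₀S
    have hdS' : d ∈ S' := hΛ₀.2 hdΛ₀
    have hdall : ∀ Λ, LineIn Ls S' Λ → d ∈ Λ := by
      intro Λ hΛ
      have hΛS : LineIn Ls S Λ := ⟨hΛ.1, hΛ.2.trans hsub⟩
      obtain ⟨d', hd'Λ, hzd'⟩ := hS.sees hz hΛS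
      have : d' = d := hone d' (hΛ.2 hd'Λ) d hdS' hzd' hzd
      exact this ▸ hd'Λ
    obtain ⟨w, hwS', hwnc⟩ := hS'.nondeg d hdS'
    obtain ⟨Λw, hΛw, hwΛw⟩ := hS'.mem_line hwS'
    exact hwnc (colIn_of_line hΛw (hdall Λw hΛw) hwΛw)
  have : S = S' := Set.Subset.antisymm hsup hsub
  rw [this]
  exact hsc'

/-- two symplecta sharing a non-collinear pair coincide -/
lemma symp_eq_of_pair (hΓ : ImbrexGeometry Ls) (hrk : SympRank Ls 2)
    {S S' : Set P} (hS : SympFacts Ls S) (hS' : SympFacts Ls S')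
    {u v : P} (hu : u ∈ S) (hv : v ∈ S) (hu' : u ∈ S') (hv' : v ∈ S')
    (hnc : ¬ Col Ls u v) : S = S' :=
  smallestConvex_unique (hS.generated hΓ hrk hu hv hnc) (hS'.generated hΓ hrk hu' hv' hnc)

/-- points of a symplecton seen by an external point are pairwise collinear -/
lemma SympFacts.trace_pairwise (hS : SympFacts Ls S) {x : P} (hx : x ∉ S)
    {d₁ d₂ : P} (h₁ : d₁ ∈ S) (h₂ : d₂ ∈ S)
    (hc₁ : Col Ls x d₁) (hc₂ : Col Ls x d₂) : Col Ls d₁ d₂ := by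
  by_contra hnc
  exact hx (hS.conv.2 d₁ h₁ d₂ h₂ hnc x (col_symm hc₁) hc₂)

/-- an external point cannot see exactly one point of a symplecton -/
lemma SympFacts.trace_not_single (hΓ : ImbrexGeometry Ls) (hrk : SympRank Ls 2)
    (hS : SympFacts Ls S) {x h₀ : P} (hx : x ∉ S) (hh₀ : h₀ ∈ S) (hcol : Col Ls x h₀)
    (honly : ∀ h ∈ S, Col Ls x h → h = h₀) : False := by
  obtain ⟨z, hzS, hznc⟩ := hS.nondeg h₀ hh₀
  have hzh₀ : ¬ Col Ls z h₀ := fun h =>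
    hznc (colIn_of_col hS.subspace hh₀ hzS (col_symm h))
  have hxh₀ : x ≠ h₀ := fun h => hx (h ▸ hh₀)
  obtain ⟨K', hK'mem, hxK', hh₀K'⟩ : ∃ L ∈ Ls, x ∈ L ∧ h₀ ∈ L := by
    rcases hcol with h | h
    · exact absurd h hxh₀
    · exact h
  have hopp : ∀ y ∈ K', ¬ Col Ls z y := by
    intro y hy hczy
    by_cases hyS : y ∈ S
    · have : y = h₀ := honly y hyS (col_of_line hK'mem hxK' hy)
      exact hzh₀ (this ▸ hczy)
    · exact hzh₀ (hS.trace_pairwise hyS hzS hh₀ (col_symm hczy)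
        (col_of_line hK'mem hy hh₀K'))
  have hznx : ¬ Col Ls z x := hopp x hxK'
  have hscS : SmallestConvex Ls z h₀ S := hS.generated hΓ hrk hzS hh₀ hzh₀
  obtain ⟨S₂, hsc₂, r₂, hr₂, hpolar₂⟩ := hΓ.spp.pps2 z x hznx
  have hS₂ : SympFacts Ls S₂ := sympFacts hΓ hrk ⟨z, x, hznx, hsc₂⟩
  have himb := (hΓ.imb z K' hK'mem hopp h₀ hh₀K' x hxK' hxh₀.symm
      S S₂ hscS hsc₂).1
  have hzS₂ : z ∈ S₂ := hsc₂.2.1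
  have hxS₂ : x ∈ S₂ := hsc₂.2.2.1
  have hSS₂ : S ∩ S₂ = {z} := by
    apply Set.Subset.antisymm
    · rintro t ⟨htS, htS₂⟩
      rw [Set.mem_singleton_iff]
      by_contra htz
      have hcolzt : Col Ls t z := by
        by_contra hnc
        have : S = S₂ := symp_eq_of_pair hΓ hrk hS hS₂ htS hzS htS₂ hzS₂ hnc
        exact hx (this ▸ hxS₂)
      obtain ⟨Λt, hΛtmem, htΛ, hzΛ⟩ : ∃ L ∈ Ls, t ∈ L ∧ z ∈ L := by
        rcases hcolzt with h | h
        · exact absurd h htz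
        · exact h
      have hΛtS : Λt ⊆ S := line_subset_of_subspace hS.subspace hΛtmem htΛ hzΛ htz htS hzS
      have hΛtS₂ : Λt ⊆ S₂ :=
        line_subset_of_subspace hS₂.subspace hΛtmem htΛ hzΛ htz htS₂ hzS₂
      obtain ⟨u, huΛ, hxu⟩ := hS₂.sees hxS₂ ⟨hΛtmem, hΛtS₂⟩
      have huS : u ∈ S := hΛtS huΛ
      have : u = h₀ := honly u huS (col_of_colIn hxu)
      exact hzh₀ (col_of_line hΛtmem hzΛ (this ▸ huΛ))
    · intro t ht
      rw [Set.mem_singleton_iff] at ht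
      exact ht ▸ ⟨hzS, hzS₂⟩
  obtain ⟨Λz, hΛz, hzΛz⟩ := hS.mem_line hzS
  have hsub : S ∩ S₂ ⊆ Λz := by
    rw [hSS₂]
    intro w hw
    rw [Set.mem_singleton_iff] at hw
    exact hw ▸ hzΛz
  have hΛeq : Λz = S ∩ S₂ := himb.2 Λz (hS.line_singular hΛz) hsub
  obtain ⟨a, ha, b, hb, c, hc, hab, hac, hbc⟩ := hS.thickLines Λz hΛz
  rw [hΛeq, hSS₂, Set.mem_singleton_iff] at ha hb
  exact hab (ha.trans hb.symm)

/-- nonempty traces of external points are full lines -/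
lemma SympFacts.trace_line (hΓ : ImbrexGeometry Ls) (hrk : SympRank Ls 2)
    (hS : SympFacts Ls S) {x : P} (hx : x ∉ S) {h : P} (hhS : h ∈ S) (hcol : Col Ls x h) :
    ∃ R, LineIn Ls S R ∧ (∀ w ∈ R, Col Ls x w) ∧ (∀ w ∈ S, Col Ls x w → w ∈ R) := by
  have h2 : ∃ h₂ ∈ S, Col Ls x h₂ ∧ h₂ ≠ h := by
    by_contra hno
    push_neg at hno
    exact hS.trace_not_single hΓ hrk hx hhS hcol (fun h' hh' hc' => hno h' hh' hc')
  obtain ⟨h₂, hh₂S, hch₂, hne₂⟩ := h2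
  have hcolhh₂ : Col Ls h h₂ := hS.trace_pairwise hx hhS hh₂S hcol hch₂
  obtain ⟨R, hRmem, hhR, hh₂R⟩ : ∃ L ∈ Ls, h ∈ L ∧ h₂ ∈ L := by
    rcases hcolhh₂ with h' | h'
    · exact absurd h'.symm hne₂
    · exact h'
  have hRS : R ⊆ S := line_subset_of_subspace hS.subspace hRmem hhR hh₂R hne₂.symm hhS hh₂S
  have hR : LineIn Ls S R := ⟨hRmem, hRS⟩
  refine ⟨R, hR, ?_, ?_⟩
  · have hxR : x ∉ R := fun h' => hx (hRS h')
    rcases hΓ.spp.pps1 x R hRmem hxR with hnone | ⟨y, ⟨hy, hcy⟩, huniq⟩ | hall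
    · exact absurd hcol (hnone h hhR)
    · have e1 : h = y := huniq h ⟨hhR, hcol⟩
      have e2 : h₂ = y := huniq h₂ ⟨hh₂R, hch₂⟩
      exact absurd (e1.trans e2.symm) hne₂.symm
    · exact hall
  · intro w hwS hcw
    by_contra hwR
    exact hS.noCone hR hwS hwR hhR hh₂R hne₂.symm
      (colIn_of_col hS.subspace hwS hhS (hS.trace_pairwise hx hwS hhS hcw hcol))
      (colIn_of_col hS.subspace hwS hh₂S (hS.trace_pairwise hx hwS hh₂S hcw hch₂))

/-- there is a tangent point to any symplecton -/
lemma SympFacts.exists_tangent (hΓ : ImbrexGeometry Ls) (hrk : SympRank Ls 2)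
    (hS : SympFacts Ls S) :
    ∃ x R, x ∉ S ∧ LineIn Ls S R ∧ (∀ w ∈ R, Col Ls x w) ∧
      (∀ w ∈ S, Col Ls x w → w ∈ R) := by
  -- a point outside S
  have hout : ∃ v, v ∉ S := by
    by_contra hno
    push_neg at hno
    obtain ⟨x₀, L₀, hL₀, hopp⟩ := hΓ.spp.pps1_none
    have hL₀S : LineIn Ls S L₀ := ⟨hL₀, fun y _ => hno y⟩
    obtain ⟨y, hy, hcy⟩ := hS.sees (hno x₀) hL₀S
    exact hopp y hy (col_of_colIn hcy)
  obtain ⟨v, hv⟩ := hout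
  obtain ⟨a, b, hnab, hsc⟩ := hS.symp
  have haS : a ∈ S := hsc.2.1
  have key : ∀ w, Relation.ReflTransGen (Col Ls) v w → w ∈ S →
      ∃ u h, u ∉ S ∧ h ∈ S ∧ Col Ls u h := by
    intro w hpath
    induction hpath with
    | refl => exact fun hvS => absurd hvS hv
    | @tail b c hvb hbc ih =>
      intro hcS
      by_cases hbS : b ∈ S
      · exact ih hbS
      · exact ⟨b, c, hbS, hcS, hbc⟩
  obtain ⟨u, h, huS, hhS, hcol⟩ := key a (hΓ.spp.connected v a) haS
  obtain ⟨R, hR, hall, hmax⟩ := hS.trace_line hΓ hrk huS hhS hcol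
  exact ⟨u, R, huS, hR, hall, hmax⟩

end Toolkit5

section Toolkit6

variable {Ls : Set (Set P)} {S : Set P}

/-- `x` is a tangent point to `S` along the line `R`. -/
def Tangent (Ls : Set (Set P)) (S : Set P) (x : P) (R : Set P) : Prop :=
  x ∉ S ∧ LineIn Ls S R ∧ ∀ w ∈ S, (Col Ls x w ↔ w ∈ R)

lemma SympFacts.exists_tangent' (hΓ : ImbrexGeometry Ls) (hrk : SympRank Ls 2)
    (hS : SympFacts Ls S) : ∃ x R, Tangent Ls S x R := by
  obtain ⟨x, R, hx, hR, hall, hmax⟩ := hS.exists_tangent hΓ hrk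
  exact ⟨x, R, hx, hR, fun w hw => ⟨fun hc => hmax w hw hc, fun hwR => hall w hwR⟩⟩

lemma Tangent.notCol {x : P} {R : Set P} (ht : Tangent Ls S x R) {w : P}
    (hw : w ∈ S) (hwR : w ∉ R) : ¬ Col Ls x w :=
  fun hc => hwR ((ht.2.2 w hw).mp hc)

lemma Tangent.col {x : P} {R : Set P} (ht : Tangent Ls S x R) {w : P}
    (hw : w ∈ R) : Col Ls x w :=
  (ht.2.2 w (ht.2.1.2 hw)).mpr hw

/-- the trace on `S` of a symplecton through a tangent point `x` of `S` and a point
`y ∈ S` off the tangent line. -/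
lemma trace_of_symp (hΓ : ImbrexGeometry Ls) (hrk : SympRank Ls 2)
    (hS : SympFacts Ls S) {x : P} {R : Set P} (ht : Tangent Ls S x R)
    {y : P} (hyS : y ∈ S) (hyR : y ∉ R)
    {W : Set P} (hW : SympFacts Ls W) (hxW : x ∈ W) (hyW : y ∈ W) :
    ∃ G, LineIn Ls S G ∧ y ∈ G ∧ (∃ r ∈ R, r ∈ G) ∧ W ∩ S = G := by
  have hnxy : ¬ Col Ls x y := ht.notCol hyS hyR
  obtain ⟨r, hrR, hyr⟩ := hS.sees hyS ht.2.1
  have hrS : r ∈ S := ht.2.1.2 hrR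
  have hcyr : Col Ls y r := col_of_colIn hyr
  have hrW : r ∈ W := hW.conv.2 x hxW y hyW hnxy r (ht.col hrR) (col_symm hcyr)
  have hyrne : y ≠ r := fun h => hyR (h ▸ hrR)
  obtain ⟨G, hGmem, hyG, hrG⟩ : ∃ L ∈ Ls, y ∈ L ∧ r ∈ L := by
    rcases hcyr with h | h
    · exact absurd h hyrne
    · exact h
  have hGS : G ⊆ S := line_subset_of_subspace hS.subspace hGmem hyG hrG hyrne hyS hrS
  have hGW : G ⊆ W := line_subset_of_subspace hW.subspace hGmem hyG hrG hyrne hyW hrW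
  have hxS : x ∉ S := ht.1
  refine ⟨G, ⟨hGmem, hGS⟩, hyG, ⟨r, hrR, hrG⟩, ?_⟩
  apply Set.Subset.antisymm
  · rintro t ⟨htW, htS⟩
    -- all points of W ∩ S are pairwise collinear
    have hpair : ∀ a ∈ W ∩ S, ∀ b ∈ W ∩ S, Col Ls a b := by
      intro a ha b hb
      by_contra hnc
      have : S = W := symp_eq_of_pair hΓ hrk hS hW ha.2 hb.2 ha.1 hb.1 hnc
      exact hxS (this ▸ hxW)
    by_cases htG : t ∈ G
    · exact htG
    exfalso
    have hty : ColIn Ls S t y := colIn_of_col hS.subspace htS hyS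
      (hpair t ⟨htW, htS⟩ y ⟨hyW, hyS⟩)
    have htr : ColIn Ls S t r := colIn_of_col hS.subspace htS hrS
      (hpair t ⟨htW, htS⟩ r ⟨hrW, hrS⟩)
    exact hS.noCone ⟨hGmem, hGS⟩ htS htG hyG hrG hyrne hty htr
  · exact fun t htG => ⟨hGW htG, hGS htG⟩

/-- a maximal singular subspace of a symplecton containing a point is a line -/
lemma SympFacts.maxSingular_line (hS : SympFacts Ls S) {T : Set P}
    (hmax : MaxSingularIn Ls S T) {x : P} (hxT : x ∈ T) :
    ∃ Λ, LineIn Ls S Λ ∧ T = Λ := by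
  have hTS : T ⊆ S := hmax.1.1.1
  by_cases h2 : ∃ x' ∈ T, x' ≠ x
  · obtain ⟨x', hx'T, hne⟩ := h2
    have hcol : ColIn Ls S x x' := hmax.1.2 x hxT x' hx'T
    obtain ⟨Λ, hΛ, hxΛ, hx'Λ⟩ : ∃ L, LineIn Ls S L ∧ x ∈ L ∧ x' ∈ L := by
      rcases hcol with h | h
      · exact absurd h.symm hne
      · exact h
    have hΛT : Λ ⊆ T := hmax.1.1.2 Λ hΛ x hxΛ x' hx'Λ (fun h => hne h.symm) hxT hx'T
    have hTΛ : T ⊆ Λ := by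
      intro t ht
      by_contra htΛ
      exact hS.noCone hΛ (hTS ht) htΛ hxΛ hx'Λ (fun h => hne h.symm)
        (hmax.1.2 t ht x hxT) (hmax.1.2 t ht x' hx'T)
    exact ⟨Λ, hΛ, Set.Subset.antisymm hTΛ hΛT⟩
  · push_neg at h2
    obtain ⟨Λz, hΛz, hxΛz⟩ := hS.mem_line (hTS hxT)
    have hsub : T ⊆ Λz := fun t ht => (h2 t ht) ▸ hxΛz
    have : Λz = T := hmax.2 Λz (hS.line_singular hΛz) hsub
    obtain ⟨a, ha, b, hb, c, hc, hab, _, _⟩ := hS.thickLines Λz hΛz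
    rw [this] at ha hb
    exact absurd ((h2 a ha).trans (h2 b hb).symm) hab

end Toolkit6

section Toolkit7

variable {Ls : Set (Set P)} {S : Set P}

/-- tangency transfers across disjoint lines -/
lemma tangent_transfer (hΓ : ImbrexGeometry Ls) (hrk : SympRank Ls 2)
    (hS : SympFacts Ls S) {x : P} {R : Set P} (ht : Tangent Ls S x R)
    {K : Set P} (hK : LineIn Ls S K) (hdisj : K ∩ R = ∅) :
    ∃ ζ, Tangent Ls S ζ K ∧ Col Ls ζ x := by
  obtain ⟨y₁, hy₁K, y₂, hy₂K, c, hcK, h12, -, -⟩ := hS.thickLines K hK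
  have hy₁S : y₁ ∈ S := hK.2 hy₁K
  have hy₂S : y₂ ∈ S := hK.2 hy₂K
  have hy₁R : y₁ ∉ R := not_mem_of_disj hdisj hy₁K
  have hy₂R : y₂ ∉ R := not_mem_of_disj hdisj hy₂K
  have hopp : ∀ w ∈ K, ¬ Col Ls x w :=
    fun w hw => ht.notCol (hK.2 hw) (not_mem_of_disj hdisj hw)
  -- the two symplecta
  obtain ⟨S₁, hsc₁, r₁', hr₁', hpolar₁⟩ := hΓ.spp.pps2 x y₁ (hopp y₁ hy₁K)
  obtain ⟨S₂, hsc₂, r₂', hr₂', hpolar₂⟩ := hΓ.spp.pps2 x y₂ (hopp y₂ hy₂K)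
  have hS₁ : SympFacts Ls S₁ := sympFacts hΓ hrk ⟨x, y₁, hopp y₁ hy₁K, hsc₁⟩
  have hS₂ : SympFacts Ls S₂ := sympFacts hΓ hrk ⟨x, y₂, hopp y₂ hy₂K, hsc₂⟩
  have hxS₁ : x ∈ S₁ := hsc₁.2.1
  have hxS₂ : x ∈ S₂ := hsc₂.2.1
  have hy₁S₁ : y₁ ∈ S₁ := hsc₁.2.2.1
  have hy₂S₂ : y₂ ∈ S₂ := hsc₂.2.2.1
  -- their traces on S
  obtain ⟨G₁, hG₁, hy₁G₁, ⟨r₁, hr₁R, hr₁G₁⟩, htr₁⟩ :=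
    trace_of_symp hΓ hrk hS ht hy₁S hy₁R hS₁ hxS₁ hy₁S₁
  obtain ⟨G₂, hG₂, hy₂G₂, ⟨r₂, hr₂R, hr₂G₂⟩, htr₂⟩ :=
    trace_of_symp hΓ hrk hS ht hy₂S hy₂R hS₂ hxS₂ hy₂S₂
  have hG₁K : G₁ ≠ K := fun h => (not_mem_of_disj hdisj (h ▸ hr₁G₁)) hr₁R
  have hG₂K : G₂ ≠ K := fun h => (not_mem_of_disj hdisj (h ▸ hr₂G₂)) hr₂R
  -- Imb
  have himb := (hΓ.imb x K hK.1 hopp y₁ hy₁K y₂ hy₂K h12 S₁ S₂ hsc₁ hsc₂).1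
  obtain ⟨Λ, hΛ, hΛeq⟩ := hS₁.maxSingular_line himb ⟨hxS₁, hxS₂⟩
  have hΛsub₂ : Λ ⊆ S₂ := by rw [← hΛeq]; exact Set.inter_subset_right
  have hxΛ : x ∈ Λ := by rw [← hΛeq]; exact ⟨hxS₁, hxS₂⟩
  -- Λ avoids S
  have hΛS : ∀ z ∈ Λ, z ∉ S := by
    intro z hzΛ hzS
    have hz₁ : z ∈ G₁ := by
      rw [← htr₁]; exact ⟨hΛ.2 hzΛ, hzS⟩
    have hz₂ : z ∈ G₂ := by
      rw [← htr₂]; exact ⟨hΛsub₂ hzΛ, hzS⟩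
    have hzy₁ : ColIn Ls S z y₁ := colIn_of_line hG₁ hz₁ hy₁G₁
    have hzy₂ : ColIn Ls S z y₂ := colIn_of_line hG₂ hz₂ hy₂G₂
    by_cases hzK : z ∈ K
    · have hz₁' : z = y₁ := by
        by_contra hne
        exact hG₁K (hS.line_eq hG₁ hK hz₁ hzK hy₁G₁ hy₁K hne)
      have hz₂' : z = y₂ := by
        by_contra hne
        exact hG₂K (hS.line_eq hG₂ hK hz₂ hzK hy₂G₂ hy₂K hne)
      exact h12 (hz₁' ▸ hz₂' ▸ rfl)
    · exact hS.noCone hK hzS hzK hy₁K hy₂K h12 hzy₁ hzy₂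
  -- the seen point of y₁ on Λ
  have hy₁Λ : y₁ ∉ Λ := fun h => hΛS y₁ h hy₁S
  obtain ⟨ζ, hζΛ, hy₁ζ⟩ := hS₁.sees hy₁S₁ hΛ
  have hζS : ζ ∉ S := hΛS ζ hζΛ
  have hcζy₁ : Col Ls ζ y₁ := col_symm (col_of_colIn hy₁ζ)
  -- ζ also sees y₂
  have hζS₂ : ζ ∈ S₂ := hΛsub₂ hζΛ
  have hG₂S₂ : LineIn Ls S₂ G₂ := by
    refine ⟨hG₂.1, ?_⟩
    rw [← htr₂]
    exact Set.inter_subset_left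
  obtain ⟨s, hsG₂, hζs⟩ := hS₂.sees hζS₂ hG₂S₂
  have hsS : s ∈ S := hG₂.2 hsG₂
  have hcζs : Col Ls ζ s := col_of_colIn hζs
  have hy₁G₂ : y₁ ∉ G₂ := by
    intro h
    exact hG₂K (hS.line_eq hG₂ hK h hy₁K hy₂G₂ hy₂K h12)
  have hsy₂ : s = y₂ := by
    refine hS.sees_unique hy₁S hG₂ hy₁G₂ hsG₂ hy₂G₂ ?_ ?_
    · exact colIn_of_col hS.subspace hy₁S hsS
        (hS.trace_pairwise hζS hy₁S hsS hcζy₁ hcζs)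
    · exact colIn_of_line hK hy₁K hy₂K
  -- the trace of ζ is K
  obtain ⟨Z, hZ, hZall, hZmax⟩ := hS.trace_line hΓ hrk hζS hy₁S hcζy₁
  have hy₁Z : y₁ ∈ Z := hZmax y₁ hy₁S hcζy₁
  have hy₂Z : y₂ ∈ Z := hZmax y₂ hy₂S (hsy₂ ▸ hcζs)
  have hZK : Z = K := hS.line_eq hZ hK hy₁Z hy₁K hy₂Z hy₂K h12
  refine ⟨ζ, ⟨hζS, hK, fun w hwS => ⟨fun hc => hZK ▸ hZmax w hwS hc, fun hwK => ?_⟩⟩, ?_⟩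
  · exact hZall w (hZK ▸ hwK)
  · exact col_of_line hΛ.1 hζΛ hxΛ

end Toolkit7

section Toolkit8

variable {Ls : Set (Set P)} {S : Set P}

/-- The key lemma: if both members of a disjoint pair of lines carry collinear tangent
points, then any line meeting two distinct transversals of the pair (and avoiding the
pair) meets every transversal of the pair. -/
lemma key_regularity (hΓ : ImbrexGeometry Ls) (hrk : SympRank Ls 2)
    (hS : SympFacts Ls S) {Pl Q : Set P} (hPl : LineIn Ls S Pl) (hQ : LineIn Ls S Q)
    (hPQ : Pl ∩ Q = ∅) {ζP ζQ : P} (htP : Tangent Ls S ζP Pl) (htQ : Tangent Ls S ζQ Q)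
    (hcolζ : Col Ls ζP ζQ)
    {T₁ T₂ Y T : Set P} (hT₁ : LineIn Ls S T₁) (hT₂ : LineIn Ls S T₂)
    (hY : LineIn Ls S Y) (hT : LineIn Ls S T) (hT₁T₂ : T₁ ≠ T₂)
    (hT₁P : (T₁ ∩ Pl).Nonempty) (hT₁Q : (T₁ ∩ Q).Nonempty)
    (hT₂P : (T₂ ∩ Pl).Nonempty) (hT₂Q : (T₂ ∩ Q).Nonempty)
    (hYT₁ : (Y ∩ T₁).Nonempty) (hYT₂ : (Y ∩ T₂).Nonempty)
    (hYP : Y ∩ Pl = ∅) (hYQ : Y ∩ Q = ∅)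
    (hTP : (T ∩ Pl).Nonempty) (hTQ : (T ∩ Q).Nonempty) :
    (Y ∩ T).Nonempty := by
  -- the common tangent line
  have hζne : ζP ≠ ζQ := by
    rintro rfl
    obtain ⟨p₀, hp₀⟩ := hS.line_nonempty hPl
    have : p₀ ∈ Q := (htQ.2.2 p₀ (hPl.2 hp₀)).mp (htP.col hp₀)
    exact (not_mem_of_disj hPQ hp₀) this
  obtain ⟨Λ, hΛmem, hζPΛ, hζQΛ⟩ : ∃ L ∈ Ls, ζP ∈ L ∧ ζQ ∈ L := by
    rcases hcolζ with h | h
    · exact absurd h hζne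
    · exact h
  have hΛS : ∀ z ∈ Λ, z ∉ S := by
    intro z hz hzS
    have h1 : z ∈ Pl := (htP.2.2 z hzS).mp (col_of_line hΛmem hζPΛ hz)
    have h2 : z ∈ Q := (htQ.2.2 z hzS).mp (col_of_line hΛmem hζQΛ hz)
    exact (not_mem_of_disj hPQ h1) h2
  -- the symplecton machine: for any transversal T' of (Pl, Q), a symplecton through
  -- ζQ whose trace is T', containing the whole line Λ
  have gadget : ∀ T', LineIn Ls S T' → (T' ∩ Pl).Nonempty → (T' ∩ Q).Nonempty →
      ∃ W, SympFacts Ls W ∧ W ∩ S = T' ∧ Λ ⊆ W := by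
    intro T' hT' ⟨t, htT', htP'⟩ ⟨q', hq'T', hq'Q⟩
    have htS : t ∈ S := hPl.2 htP'
    have htQcol : ¬ Col Ls ζQ t := htQ.notCol htS (not_mem_of_disj hPQ htP')
    obtain ⟨W, hscW, rW, hrW, hpolW⟩ := hΓ.spp.pps2 ζQ t htQcol
    have hW : SympFacts Ls W := sympFacts hΓ hrk ⟨ζQ, t, htQcol, hscW⟩
    have hζQW : ζQ ∈ W := hscW.2.1
    have htW : t ∈ W := hscW.2.2.1
    obtain ⟨G, hG, htG, ⟨q, hqQ, hqG⟩, htr⟩ :=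
      trace_of_symp hΓ hrk hS htQ htS (not_mem_of_disj hPQ htP') hW hζQW htW
    -- G = T'
    have htQ' : t ∉ Q := not_mem_of_disj hPQ htP'
    have hqq' : q' = q := by
      refine hS.sees_unique htS hQ htQ' hq'Q hqQ ?_ ?_
      · exact colIn_of_line hT' htT' hq'T'
      · exact colIn_of_line hG htG hqG
    have htq : t ≠ q := fun h => htQ' (h ▸ hqQ)
    have hGT' : G = T' := hS.line_eq hG hT' htG htT' hqG (hqq' ▸ hq'T') htq
    -- Λ ⊆ W
    have hζPW : ζP ∈ W := hW.conv.2 ζQ hζQW t htW htQcol ζP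
      (col_symm hcolζ) (htP.col htP')
    have hΛW : Λ ⊆ W :=
      line_subset_of_subspace hW.subspace hΛmem hζPΛ hζQΛ hζne hζPW hζQW
    exact ⟨W, hW, hGT' ▸ htr, hΛW⟩
  -- instantiate for T₁, T₂, T
  obtain ⟨W₁, hW₁, htr₁, hΛW₁⟩ := gadget T₁ hT₁ hT₁P hT₁Q
  obtain ⟨W₂, hW₂, htr₂, hΛW₂⟩ := gadget T₂ hT₂ hT₂P hT₂Q
  obtain ⟨W₃, hW₃, htr₃, hΛW₃⟩ := gadget T hT hTP hTQ
  obtain ⟨y₁, hy₁Y, hy₁T₁⟩ := hYT₁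
  obtain ⟨y₂, hy₂Y, hy₂T₂⟩ := hYT₂
  have hy₁S : y₁ ∈ S := hY.2 hy₁Y
  have hy₂S : y₂ ∈ S := hY.2 hy₂Y
  have hT₁T₂disj : T₁ ∩ T₂ = ∅ :=
    hS.transversal_disjoint hPl hQ hT₁ hT₂ hPQ hT₁T₂ hT₁P hT₁Q hT₂P hT₂Q
  have hy₁y₂ : y₁ ≠ y₂ := by
    rintro rfl
    exact (not_mem_of_disj hT₁T₂disj hy₁T₁) hy₂T₂
  -- the seen point γ of y₁ on Λ, inside W₁
  have hy₁W₁ : y₁ ∈ W₁ := by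
    have : y₁ ∈ W₁ ∩ S := by rw [htr₁]; exact hy₁T₁
    exact this.1
  have hΛW₁' : LineIn Ls W₁ Λ := ⟨hΛmem, hΛW₁⟩
  obtain ⟨γ, hγΛ, hy₁γ⟩ := hW₁.sees hy₁W₁ hΛW₁'
  have hγS : γ ∉ S := hΛS γ hγΛ
  have hcγy₁ : Col Ls γ y₁ := col_symm (col_of_colIn hy₁γ)
  have hγζP : γ ≠ ζP := by
    rintro rfl
    exact (not_mem_of_disj hYP hy₁Y) ((htP.2.2 y₁ hy₁S).mp hcγy₁)
  have hγζQ : γ ≠ ζQ := by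
    rintro rfl
    exact (not_mem_of_disj hYQ hy₁Y) ((htQ.2.2 y₁ hy₁S).mp hcγy₁)
  -- trace of γ
  obtain ⟨Z, hZ, hZall, hZmax⟩ := hS.trace_line hΓ hrk hγS hy₁S hcγy₁
  have hy₁Z : y₁ ∈ Z := hZmax y₁ hy₁S hcγy₁
  -- γ sees y₂ via W₂
  have hT₂W₂ : LineIn Ls W₂ T₂ := by
    refine ⟨hT₂.1, ?_⟩
    rw [← htr₂]
    exact Set.inter_subset_left
  have hγW₂ : γ ∈ W₂ := hΛW₂ hγΛ
  obtain ⟨s, hsT₂, hγs⟩ := hW₂.sees hγW₂ hT₂W₂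
  have hsS : s ∈ S := hT₂.2 hsT₂
  have hsZ : s ∈ Z := hZmax s hsS (col_of_colIn hγs)
  have hy₁T₂ : y₁ ∉ T₂ := fun h => (not_mem_of_disj hT₁T₂disj hy₁T₁) h
  have hsy₂ : s = y₂ := by
    refine hS.sees_unique hy₁S hT₂ hy₁T₂ hsT₂ hy₂T₂ ?_ ?_
    · refine colIn_of_col hS.subspace hy₁S hsS ?_
      rcases eq_or_ne y₁ s with h | hne
      · exact Or.inl h
      · exact hS.trace_pairwise hγS hy₁S hsS hcγy₁ (col_of_colIn hγs)
    · exact colIn_of_line hY hy₁Y hy₂Y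
  have hy₂Z : y₂ ∈ Z := hsy₂ ▸ hsZ
  have hZY : Z = Y := hS.line_eq hZ hY hy₁Z hy₁Y hy₂Z hy₂Y hy₁y₂
  -- γ sees a point of T via W₃, which lies on Z = Y
  have hTW₃ : LineIn Ls W₃ T := by
    refine ⟨hT.1, ?_⟩
    rw [← htr₃]
    exact Set.inter_subset_left
  have hγW₃ : γ ∈ W₃ := hΛW₃ hγΛ
  obtain ⟨s₃, hs₃T, hγs₃⟩ := hW₃.sees hγW₃ hTW₃
  have hs₃S : s₃ ∈ S := hT.2 hs₃T
  have hs₃Z : s₃ ∈ Z := hZmax s₃ hs₃S (col_of_colIn hγs₃)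
  exact ⟨s₃, hZY ▸ hs₃Z, hs₃T⟩

end Toolkit8

/-- In an imbrex geometry of symplectic rank 2, every pair of non-concurrent
lines of any symplecton is regular. -/
theorem nonconcurrent_pair_regular (Ls : Set (Set P))
    (hΓ : ImbrexGeometry Ls) (hrk : SympRank Ls 2)
    (H : Set P) (hH : IsSymp Ls H)
    (L M : Set P) (hL : LineIn Ls H L) (hM : LineIn Ls H M)
    (hnc : L ∩ M = ∅) :
    RegularPair Ls H L M := by
  classical
  have hS : SympFacts Ls H := sympFacts hΓ hrk hH
  obtain ⟨y₁, hy₁L, y₂, hy₂L, c₀, hc₀L, h12, -, -⟩ := hS.thickLines L hL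
  have hLM : L ≠ M := fun h => (not_mem_of_disj hnc hy₁L) (h ▸ hy₁L)
  -- transversals through points of L
  have mkTrans : ∀ y ∈ L, ∃ A, LineIn Ls H A ∧ y ∈ A ∧ (∃ m ∈ M, m ∈ A) := by
    intro y hyL
    have hyH : y ∈ H := hL.2 hyL
    obtain ⟨m, hmM, hym⟩ := hS.sees hyH hM
    have hne : y ≠ m := fun h => (not_mem_of_disj hnc hyL) (h ▸ hmM)
    rcases hym with h | ⟨A, hA, hyA, hmA⟩
    · exact absurd h hne
    · exact ⟨A, hA, hyA, m, hmM, hmA⟩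
  obtain ⟨A, hA, hy₁A, m₁, hm₁M, hm₁A⟩ := mkTrans y₁ hy₁L
  obtain ⟨B, hB, hy₂B, m₂, hm₂M, hm₂B⟩ := mkTrans y₂ hy₂L
  have hAL : (A ∩ L).Nonempty := ⟨y₁, hy₁A, hy₁L⟩
  have hAM : (A ∩ M).Nonempty := ⟨m₁, hm₁A, hm₁M⟩
  have hBL : (B ∩ L).Nonempty := ⟨y₂, hy₂B, hy₂L⟩
  have hBM : (B ∩ M).Nonempty := ⟨m₂, hm₂B, hm₂M⟩
  have hAneL : A ≠ L := by
    rintro rfl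
    exact (not_mem_of_disj hnc hm₁A) hm₁M
  have hBneL : B ≠ L := by
    rintro rfl
    exact (not_mem_of_disj hnc hm₂B) hm₂M
  have hAneM : A ≠ M := by
    rintro rfl
    exact (not_mem_of_disj hnc hy₁L) hy₁A
  have hBneM : B ≠ M := by
    rintro rfl
    exact (not_mem_of_disj hnc hy₂L) hy₂B
  have hAB : A ≠ B := by
    rintro rfl
    exact hAneL (hS.line_eq hA hL hy₁A hy₁L hy₂B hy₂L h12)
  have hABdisj : A ∩ B = ∅ :=
    hS.transversal_disjoint hL hM hA hB hnc hAB hAL hAM hBL hBM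
  have hm₁₂ : m₁ ≠ m₂ := by
    rintro rfl
    exact (not_mem_of_disj hABdisj hm₁A) hm₂B
  -- membership of A, B in the perp of {L, M}
  have hAperp : A ∈ PerpSet Ls H {L, M} := by
    refine ⟨hA, ?_⟩
    rintro M'' (rfl | rfl)
    · exact hAL
    · exact hAM
  have hBperp : B ∈ PerpSet Ls H {L, M} := by
    refine ⟨hB, ?_⟩
    rintro M'' (rfl | rfl)
    · exact hBL
    · exact hBM
  -- the reduction lemma
  have hred : ∀ L' : Set P, LineIn Ls H L' → A ≠ L' → B ≠ L' →
      ∀ u₁ ∈ A, u₁ ∈ L' → ∀ u₂ ∈ B, u₂ ∈ L' → u₁ ≠ u₂ →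
      ∀ N : Set P, LineIn Ls H N → N ≠ L' →
        (N ∩ A).Nonempty → (N ∩ B).Nonempty → N ∩ L' = ∅ := by
    intro L' hL' hAL' hBL' u₁ hu₁A hu₁L' u₂ hu₂B hu₂L' hu₁₂ N hN hNL' hNA hNB
    by_contra hne
    obtain ⟨p, hpN, hpL'⟩ := Set.nonempty_iff_ne_empty.mpr hne
    obtain ⟨a, haN, haA⟩ := hNA
    obtain ⟨b, hbN, hbB⟩ := hNB
    have haH : a ∈ H := hN.2 haN
    have hbH : b ∈ H := hN.2 hbN
    by_cases haL' : a ∈ L'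
    · have hau₁ : a = u₁ := by
        by_contra h
        exact hAL' (hS.line_eq hA hL' haA haL' hu₁A hu₁L' h)
      have hpa : p = a := by
        by_contra h
        exact hNL' (hS.line_eq hN hL' hpN hpL' haN haL' h)
      by_cases hbL' : b ∈ L'
      · have hbu₂ : b = u₂ := by
          by_contra h
          exact hBL' (hS.line_eq hB hL' hbB hbL' hu₂B hu₂L' h)
        have hpb : p ≠ b := by
          rw [hpa, hau₁, hbu₂]
          exact hu₁₂
        exact hNL' (hS.line_eq hN hL' hpN hpL' hbN hbL' hpb)
      · have hpu₂ : p ≠ u₂ := by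
          rw [hpa, hau₁]
          exact hu₁₂
        exact hS.noCone hL' hbH hbL' hpL' hu₂L' hpu₂
          (colIn_of_line hN hbN hpN) (colIn_of_line hB hbB hu₂B)
    · have hpu₁ : p = u₁ := by
        by_contra h
        exact hS.noCone hL' haH haL' hpL' hu₁L' h
          (colIn_of_line hN haN hpN) (colIn_of_line hA haA hu₁A)
      have hpA : p ∈ A := hpu₁ ▸ hu₁A
      have hap : a ≠ p := fun h => haL' (h ▸ hpL')
      have hNA' : N = A := hS.line_eq hN hA haN haA hpN hpA hap
      exact (not_mem_of_disj hABdisj (hNA' ▸ hbN)) hbB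
  -- the two directions of the perp-set identity
  refine ⟨A, B, hAperp, hBperp, hAB, ?_⟩
  apply Set.Subset.antisymm
  · intro N hN
    refine ⟨hN.1, ?_⟩
    intro M'' hM''
    rcases Set.mem_insert_iff.mp hM'' with h | h
    · rw [h]
      exact hN.2 A hAperp
    · rw [Set.mem_singleton_iff.mp h]
      exact hN.2 B hBperp
  · intro N hN
    have hNline : LineIn Ls H N := hN.1
    have hNA : (N ∩ A).Nonempty := hN.2 A (Set.mem_insert A {B})
    have hNB : (N ∩ B).Nonempty := hN.2 B (Set.mem_insert_of_mem A rfl)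
    refine ⟨hNline, ?_⟩
    intro C hC
    have hCline : LineIn Ls H C := hC.1
    have hCL : (C ∩ L).Nonempty := hC.2 L (Set.mem_insert L {M})
    have hCM : (C ∩ M).Nonempty := hC.2 M (Set.mem_insert_of_mem L rfl)
    -- trivial cases
    by_cases hNL : N = L
    · obtain ⟨w, hw1, hw2⟩ := hCL
      exact ⟨w, hNL ▸ hw2, hw1⟩
    by_cases hNM : N = M
    · obtain ⟨w, hw1, hw2⟩ := hCM
      exact ⟨w, hNM ▸ hw2, hw1⟩
    by_cases hCA : C = A
    · obtain ⟨w, hw1, hw2⟩ := hNA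
      exact ⟨w, hw1, hCA ▸ hw2⟩
    by_cases hCB : C = B
    · obtain ⟨w, hw1, hw2⟩ := hNB
      exact ⟨w, hw1, hCB ▸ hw2⟩
    -- main case
    have hNLdisj : N ∩ L = ∅ :=
      hred L hL hAneL hBneL y₁ hy₁A hy₁L y₂ hy₂B hy₂L h12 N hNline hNL hNA hNB
    have hNMdisj : N ∩ M = ∅ :=
      hred M hM hAneM hBneM m₁ hm₁A hm₁M m₂ hm₂B hm₂M hm₁₂ N hNline hNM hNA hNB
    have hCAdisj : C ∩ A = ∅ :=
      hS.transversal_disjoint hL hM hCline hA hnc (fun h => hCA h) hCL hCM hAL hAM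
    have hCBdisj : C ∩ B = ∅ :=
      hS.transversal_disjoint hL hM hCline hB hnc (fun h => hCB h) hCL hCM hBL hBM
    have comm : ∀ X Y : Set P, X ∩ Y = ∅ → Y ∩ X = ∅ := by
      intro X Y h
      rw [Set.inter_comm]
      exact h
    have hACdisj : A ∩ C = ∅ := comm _ _ hCAdisj
    have hBCdisj : B ∩ C = ∅ := comm _ _ hCBdisj
    have hBAdisj : B ∩ A = ∅ := comm _ _ hABdisj
    have hLNdisj : L ∩ N = ∅ := comm _ _ hNLdisj
    have hMLdisj : M ∩ L = ∅ := comm _ _ hnc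
    have ncomm : ∀ X Y : Set P, (X ∩ Y).Nonempty → (Y ∩ X).Nonempty := by
      rintro X Y ⟨w, h1, h2⟩
      exact ⟨w, h2, h1⟩
    -- the two ways to conclude
    have viaAB : ∀ ζA ζB : P, Tangent Ls H ζA A → Tangent Ls H ζB B →
        Col Ls ζA ζB → (N ∩ C).Nonempty := by
      intro ζA ζB htA htB hcol
      exact ncomm C N (key_regularity hΓ hrk hS hA hB hABdisj htA htB hcol
        hL hM hCline hNline hLM (ncomm A L hAL) (ncomm B L hBL) (ncomm A M hAM)
        (ncomm B M hBM) hCL hCM hCAdisj hCBdisj hNA hNB)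
    have viaLM : ∀ ζL ζM : P, Tangent Ls H ζL L → Tangent Ls H ζM M →
        Col Ls ζL ζM → (N ∩ C).Nonempty := by
      intro ζL ζM htL htM hcol
      exact key_regularity hΓ hrk hS hL hM hnc htL htM hcol
        hA hB hNline hCline hAB hAL hAM hBL hBM hNA hNB hNLdisj hNMdisj hCL hCM
    -- obtain an initial tangent point and propagate the tangency
    obtain ⟨x₀, R, htan⟩ := hS.exists_tangent' hΓ hrk
    have hR : LineIn Ls H R := htan.2.1
    by_cases hRC : R ∩ C = ∅
    · obtain ⟨ζC, htC, -⟩ := tangent_transfer hΓ hrk hS htan hCline (comm _ _ hRC)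
      obtain ⟨ζA, htA, -⟩ := tangent_transfer hΓ hrk hS htC hA hACdisj
      obtain ⟨ζB, htB, hcolBA⟩ := tangent_transfer hΓ hrk hS htA hB hBAdisj
      exact viaAB ζA ζB htA htB (col_symm hcolBA)
    by_cases hRN : R ∩ N = ∅
    · obtain ⟨ζN, htN, -⟩ := tangent_transfer hΓ hrk hS htan hNline (comm _ _ hRN)
      obtain ⟨ζL, htL, -⟩ := tangent_transfer hΓ hrk hS htN hL hLNdisj
      obtain ⟨ζM, htM, hcolML⟩ := tangent_transfer hΓ hrk hS htL hM hMLdisj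
      exact viaLM ζL ζM htL htM (col_symm hcolML)
    by_cases hRA : R ∩ A = ∅
    · obtain ⟨ζA, htA, -⟩ := tangent_transfer hΓ hrk hS htan hA (comm _ _ hRA)
      obtain ⟨ζB, htB, hcolBA⟩ := tangent_transfer hΓ hrk hS htA hB hBAdisj
      exact viaAB ζA ζB htA htB (col_symm hcolBA)
    by_cases hRB : R ∩ B = ∅
    · obtain ⟨ζB, htB, -⟩ := tangent_transfer hΓ hrk hS htan hB (comm _ _ hRB)
      obtain ⟨ζA, htA, hcolAB⟩ := tangent_transfer hΓ hrk hS htB hA hABdisj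
      exact viaAB ζA ζB htA htB hcolAB
    by_cases hRL : R ∩ L = ∅
    · obtain ⟨ζL, htL, -⟩ := tangent_transfer hΓ hrk hS htan hL (comm _ _ hRL)
      obtain ⟨ζM, htM, hcolML⟩ := tangent_transfer hΓ hrk hS htL hM hMLdisj
      exact viaLM ζL ζM htL htM (col_symm hcolML)
    by_cases hRM : R ∩ M = ∅
    · obtain ⟨ζM, htM, -⟩ := tangent_transfer hΓ hrk hS htan hM (comm _ _ hRM)
      obtain ⟨ζL, htL, hcolLM⟩ := tangent_transfer hΓ hrk hS htM hL hnc
      exact viaLM ζL ζM htL htM hcolLM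
    -- otherwise R is itself a transversal of (L, M), hence equal to C
    by_cases hReqC : R = C
    · have hARdisj : A ∩ R = ∅ := hReqC ▸ hACdisj
      obtain ⟨ζA, htA, -⟩ := tangent_transfer hΓ hrk hS htan hA hARdisj
      obtain ⟨ζB, htB, hcolBA⟩ := tangent_transfer hΓ hrk hS htA hB hBAdisj
      exact viaAB ζA ζB htA htB (col_symm hcolBA)
    · exfalso
      have hRL' : (R ∩ L).Nonempty := Set.nonempty_iff_ne_empty.mpr hRL
      have hRM' : (R ∩ M).Nonempty := Set.nonempty_iff_ne_empty.mpr hRM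
      exact hRC (hS.transversal_disjoint hL hM hR hCline hnc hReqC hRL' hRM' hCL hCM)
end ImbrexGeom
end

section
/- Let Q be a generalized quadrangle embedded in a finite-dimensional projective space P^n(L) over a skew field L, dually: points of the quadrangle \Delta are lines of P^n(L) forming the dual quadrangle \Omega, blocks are points of P^n(L). Let L, M1, M2 be lines of \Omega such that M1 and M2 intersect in a point and L does not intersect the plane spanned by M1 and M2. Then the 3-spaces <L, M1> and <L, M2> intersect in a plane containing at least two lines of \Omega, namely L and the unique line of \Omega through M1 \cap M2 meeting L. -/
/-!
In vector-space dimensions, `L` is skew to the plane `M₁ ⊔ M₂`, so the dimension formula gives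
`dim ((L ⊔ M₁) ⊓ (L ⊔ M₂)) = dim L + dim (M₁ ⊓ M₂) = 3`. The quadrangle axiom, applied to the
point `p = M₁ ⊓ M₂` and the line `L`, yields a line `W ∈ Ω` through `p` with `q = W ⊓ L ≠ ⊥`.
Since `p ∉ L`, the line `W` is spanned by `p` and `q`, and both lie in `L ⊔ M₁` and `L ⊔ M₂`.
-/

open Module Submodule

section Dimension

variable {K V : Type*} [DivisionRing K] [AddCommGroup V] [Module K V] [FiniteDimensional K V]

theorem finrank_sup_of_inf_eq_bot {A B : Submodule K V} (h : A ⊓ B = ⊥) :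
    finrank K ↥(A ⊔ B) = finrank K ↥A + finrank K ↥B := by
  have := finrank_sup_add_finrank_inf_eq A B
  rwa [h, finrank_bot, add_zero] at this

theorem finrank_sup_inf_sup_of_inf_sup_eq_bot {L A B : Submodule K V} (h : L ⊓ (A ⊔ B) = ⊥) :
    finrank K ↥((L ⊔ A) ⊓ (L ⊔ B)) = finrank K ↥L + finrank K ↥(A ⊓ B) := by
  have hA : L ⊓ A = ⊥ := eq_bot_mono (inf_le_inf_left L le_sup_left) h
  have hB : L ⊓ B = ⊥ := eq_bot_mono (inf_le_inf_left L le_sup_right) h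
  have hsup : (L ⊔ A) ⊔ (L ⊔ B) = L ⊔ (A ⊔ B) := by rw [sup_sup_sup_comm, sup_idem]
  have key := finrank_sup_add_finrank_inf_eq (L ⊔ A) (L ⊔ B)
  have hAB := finrank_sup_add_finrank_inf_eq A B
  rw [hsup, finrank_sup_of_inf_eq_bot h, finrank_sup_of_inf_eq_bot hA,
    finrank_sup_of_inf_eq_bot hB] at key
  omega

theorem sup_eq_of_finrank_eq_two {W p q : Submodule K V} (hW : finrank K ↥W = 2)
    (hp : finrank K ↥p = 1) (hq : q ≠ ⊥) (hpW : p ≤ W) (hqW : q ≤ W) (hpq : p ⊓ q = ⊥) :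
    p ⊔ q = W := by
  refine eq_of_le_of_finrank_le (sup_le hpW hqW) ?_
  have hq_pos : 0 < finrank K ↥q := Nat.pos_of_ne_zero (mt finrank_eq_zero.mp hq)
  rw [finrank_sup_of_inf_eq_bot hpq]
  omega

end Dimension

theorem dual_embedded_quadrangle_imbrex_general
    {K : Type*} [DivisionRing K] {V : Type*} [AddCommGroup V] [Module K V]
    [FiniteDimensional K V]
    (Ω : Set (Submodule K V))
    (hdim : ∀ W ∈ Ω, Module.finrank K ↥W = 2)
    (hGQ : ∀ N ∈ Ω, ∀ p : Submodule K V, Module.finrank K ↥p = 1 → p ≤ N →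
        ∀ M ∈ Ω, ¬ p ≤ M → ∃! W, W ∈ Ω ∧ p ≤ W ∧ W ⊓ M ≠ ⊥)
    (L M₁ M₂ : Submodule K V) (hL : L ∈ Ω) (hM₁ : M₁ ∈ Ω)
    (hmeet : Module.finrank K ↥(M₁ ⊓ M₂) = 1)
    (hskew : L ⊓ (M₁ ⊔ M₂) = ⊥) :
    Module.finrank K ↥((L ⊔ M₁) ⊓ (L ⊔ M₂)) = 3 ∧
    L ≤ (L ⊔ M₁) ⊓ (L ⊔ M₂) ∧
    ∃ W ∈ Ω, W ≠ L ∧ M₁ ⊓ M₂ ≤ W ∧ W ⊓ L ≠ ⊥ ∧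
      W ≤ (L ⊔ M₁) ⊓ (L ⊔ M₂) := by
  refine ⟨by rw [finrank_sup_inf_sup_of_inf_sup_eq_bot hskew, hdim L hL, hmeet],
    le_inf le_sup_left le_sup_left, ?_⟩
  set p := M₁ ⊓ M₂
  have hpL : p ⊓ L = ⊥ :=
    eq_bot_mono (le_inf inf_le_right (inf_le_left.trans (inf_le_left.trans le_sup_left))) hskew
  have hp_not_le_L : ¬ p ≤ L := fun h => by
    rw [inf_eq_left.mpr h] at hpL
    rw [hpL, finrank_bot] at hmeet
    exact zero_ne_one hmeet
  obtain ⟨W, ⟨hWΩ, hpW, hWL⟩, -⟩ := hGQ M₁ hM₁ p hmeet inf_le_left L hL hp_not_le_L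
  have hW_span : p ⊔ (W ⊓ L) = W := sup_eq_of_finrank_eq_two (hdim W hWΩ) hmeet hWL hpW
    inf_le_left (eq_bot_mono (inf_le_inf_left p inf_le_right) hpL)
  refine ⟨W, hWΩ, fun h => hp_not_le_L (h ▸ hpW), hpW, hWL, hW_span ▸ le_inf ?_ ?_⟩
  · exact sup_le (inf_le_left.trans le_sup_right) (inf_le_right.trans le_sup_left)
  · exact sup_le (inf_le_right.trans le_sup_right) (inf_le_right.trans le_sup_left)

/-- Let `Ω` be the dual of a generalized quadrangle, embedded in a
finite-dimensional projective space `P(V)` over a skew field `K`: the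
elements of `Ω` are projective lines (2-dimensional submodules), concurrent
lines of `Ω` meet in a projective point, and for every projective point `p`
on a line `N` of `Ω` and every line `M` of `Ω` not through `p`, there is a
unique line of `Ω` through `p` meeting `M`.  If `M₁, M₂ ∈ Ω` meet in a point
and `L ∈ Ω` does not meet the plane `⟨M₁, M₂⟩`, then the 3-spaces `⟨L, M₁⟩`
and `⟨L, M₂⟩` intersect in a plane containing at least two lines of `Ω`,
namely `L` and the unique line of `Ω` through `M₁ ∩ M₂` meeting `L`. -/
theorem dual_embedded_quadrangle_imbrex
    {K : Type*} [DivisionRing K] {V : Type*} [AddCommGroup V] [Module K V]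
    [FiniteDimensional K V]
    (Ω : Set (Submodule K V))
    (hdim : ∀ W ∈ Ω, Module.finrank K ↥W = 2)
    (hconc : ∀ W₁ ∈ Ω, ∀ W₂ ∈ Ω, W₁ ≠ W₂ → W₁ ⊓ W₂ ≠ ⊥ →
        Module.finrank K ↥(W₁ ⊓ W₂) = 1)
    (hGQ : ∀ N ∈ Ω, ∀ p : Submodule K V, Module.finrank K ↥p = 1 → p ≤ N →
        ∀ M ∈ Ω, ¬ p ≤ M → ∃! W, W ∈ Ω ∧ p ≤ W ∧ W ⊓ M ≠ ⊥)
    (L M₁ M₂ : Submodule K V) (hL : L ∈ Ω) (hM₁ : M₁ ∈ Ω) (hM₂ : M₂ ∈ Ω)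
    (hM₁₂ : M₁ ≠ M₂) (hmeet : Module.finrank K ↥(M₁ ⊓ M₂) = 1)
    (hskew : L ⊓ (M₁ ⊔ M₂) = ⊥) :
    Module.finrank K ↥((L ⊔ M₁) ⊓ (L ⊔ M₂)) = 3 ∧
    L ≤ (L ⊔ M₁) ⊓ (L ⊔ M₂) ∧
    ∃ W ∈ Ω, W ≠ L ∧ M₁ ⊓ M₂ ≤ W ∧ W ⊓ L ≠ ⊥ ∧
      W ≤ (L ⊔ M₁) ⊓ (L ⊔ M₂) :=
  dual_embedded_quadrangle_imbrex_general Ω hdim hGQ L M₁ M₂ hL hM₁ hmeet hskew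
end
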